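/- arXiv:1509.01528 — 7 statements merged into one kernel-verified Lean document; each statement's English description precedes it below -/
import Mathlib

section
/- Let n = 2m+1 be an odd positive integer. For any two real n×n matrices A₁, A₂ there exist real numbers (λ₁, λ₂) ≠ (0,0) such that the matrix λ₁A₁ + λ₂A₂ is singular (not invertible). -/
/-!
Along the half-circle `t ↦ (cos t, sin t)`, `t ∈ [0, π]`, the function
`t ↦ det (cos t • A₁ + sin t • A₂)` goes from `det A₁` to `det (-A₁) = -det A₁`, because the
size of the matrices is odd. By the intermediate value theorem it vanishes somewhere.
-/

open Real

theorem Function.Antiperiodic.exists_eq_zero {δ : Type*} [AddCommGroup δ] [LinearOrder δ]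
    [IsOrderedAddMonoid δ] [TopologicalSpace δ] [OrderClosedTopology δ] {f : ℝ → δ} {c : ℝ}
    (hf : Continuous f) (hc : Function.Antiperiodic f c) : ∃ t, f t = 0 := by
  have hzero : (0 : δ) ∈ Set.uIcc (f 0) (f c) := by
    rw [hc.eq, Set.mem_uIcc]
    rcases le_total (f 0) 0 with h | h
    · exact Or.inl ⟨h, neg_nonneg.mpr h⟩
    · exact Or.inr ⟨neg_nonpos.mpr h, h⟩
  obtain ⟨t, -, ht⟩ := intermediate_value_uIcc hf.continuousOn hzero
  exact ⟨t, ht⟩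

theorem Matrix.antiperiodic_det_cos_smul_add_sin_smul {n : Type*} [Fintype n] [DecidableEq n]
    (hn : Odd (Fintype.card n)) (A₁ A₂ : Matrix n n ℝ) :
    Function.Antiperiodic (fun t => (cos t • A₁ + sin t • A₂).det) π := fun t => by
  simp only [cos_add_pi, sin_add_pi, neg_smul, ← neg_add, det_neg, hn.neg_one_pow, neg_one_mul]

/-- For n an odd positive integer, any two real n×n matrices admit a non-trivial
real linear combination that is singular. -/
theorem two_matrices_singular_combination (m : ℕ)
    (A₁ A₂ : Matrix (Fin (2 * m + 1)) (Fin (2 * m + 1)) ℝ) :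
    ∃ lam₁ lam₂ : ℝ, (lam₁, lam₂) ≠ (0, 0) ∧
      ¬ IsUnit (lam₁ • A₁ + lam₂ • A₂) := by
  have hodd : Odd (Fintype.card (Fin (2 * m + 1))) := by simp
  have hcont : Continuous fun t => (cos t • A₁ + sin t • A₂).det := by fun_prop
  obtain ⟨t, ht⟩ :=
    (Matrix.antiperiodic_det_cos_smul_add_sin_smul hodd A₁ A₂).exists_eq_zero hcont
  refine ⟨cos t, sin t, fun h => ?_, ?_⟩
  · obtain ⟨hcos, hsin⟩ := Prod.mk.inj h
    have hone := cos_sq_add_sin_sq t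
    rw [hcos, hsin] at hone
    norm_num at hone
  · rwa [Matrix.isUnit_iff_isUnit_det, isUnit_iff_ne_zero, not_not]
end

section
/- (Borsuk–Ulam for S²) For every continuous map f : S² → ℝ² there exists a point s ∈ S² with f(-s) = f(s). -/
/-!
If `f (-s) ≠ f s` everywhere, `s ↦ f s - f (-s)` is an odd nowhere-vanishing map to `ℂ`.
Pulled back to the plane `vᗮ` by inverse stereographic projection, it has a continuous logarithm
`L` since the plane is simply connected. On the circle of `vᗮ` that goes onto the equator, oddness
gives `exp (L (-w) - L w) = -1`, while `w ↦ Im (L (-w) - L w)` is odd and so vanishes somewhere on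
the connected circle; there `exp (L (-w) - L w)` would be positive.
-/

open Metric Set

theorem IsPreconnected.exists_eq_zero_of_odd {X : Type*} [TopologicalSpace X] {C : Set X}
    (hC : IsPreconnected C) {σ : X → X} (hσC : MapsTo σ C C) {f : X → ℝ} (hf : ContinuousOn f C)
    (hodd : ∀ x ∈ C, f (σ x) = -f x) {x₀ : X} (hx₀ : x₀ ∈ C) : ∃ x ∈ C, f x = 0 := by
  rcases le_total (f x₀) 0 with h | h
  · exact hC.intermediate_value hx₀ (hσC hx₀) hf ⟨h, by linarith [hodd x₀ hx₀]⟩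
  · exact hC.intermediate_value (hσC hx₀) hx₀ hf ⟨by linarith [hodd x₀ hx₀], h⟩

theorem exists_eq_zero_of_odd_on_isPreconnected {A : Type*} [TopologicalSpace A]
    [SimplyConnectedSpace A] [LocallyPathConnectedSpace A] {σ : A → A} (hσ : Continuous σ)
    (hσσ : Function.Involutive σ) {C : Set A} (hC : IsPreconnected C) (hσC : MapsTo σ C C)
    (hCne : C.Nonempty) {g : A → ℂ} (hg : Continuous g) (hodd : ∀ x ∈ C, g (σ x) = -g x) :
    ∃ x, g x = 0 := by
  by_contra! hg0
  obtain ⟨x₀, hx₀⟩ := hCne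
  obtain ⟨L, -, hL⟩ := (Complex.isCoveringMapOn_exp.existsUnique_continuousMap_lifts ⟨g, hg⟩
    (Complex.exp_log (hg0 x₀)) hg0).exists
  have hexp : ∀ x, Complex.exp (L x) = g x := fun x => congrFun hL x
  have hdiff : ∀ x ∈ C, Complex.exp (L (σ x) - L x) = -1 := fun x hx => by
    rw [Complex.exp_sub, hexp, hexp, hodd x hx, neg_div, div_self (hg0 x)]
  obtain ⟨x, hx, hx0⟩ := hC.exists_eq_zero_of_odd hσC
    (f := fun x => (L (σ x) - L x).im) (by fun_prop)
    (fun x _ => by simp only [hσσ x, Complex.sub_im]; ring) hx₀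
  have hreal : L (σ x) - L x = ((L (σ x) - L x).re : ℂ) :=
    Complex.ext (by simp) (by simpa using hx0)
  have hexp_neg : Real.exp (L (σ x) - L x).re = -1 := by
    exact_mod_cast hreal ▸ hdiff x hx
  linarith [Real.exp_pos (L (σ x) - L x).re]

section Sphere

variable {E : Type*} [NormedAddCommGroup E] [InnerProductSpace ℝ E]

theorem stereoInvFun_neg_of_norm_eq_two {v : E} (hv : ‖v‖ = 1) {w : (ℝ ∙ v)ᗮ} (hw : ‖w‖ = 2) :
    stereoInvFun hv (-w) = -stereoInvFun hv w := by
  ext1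
  simp only [stereoInvFun_apply, coe_neg_sphere, norm_neg, hw, Submodule.coe_neg]
  module

open Module in
theorem exists_map_neg_eq_map_of_finrank_eq {n : ℕ} [Fact (finrank ℝ E = n + 1)] (hn : 2 ≤ n)
    {f : sphere (0 : E) 1 → ℂ} (hf : Continuous f) : ∃ s, f (-s) = f s := by
  have : Nontrivial E := nontrivial_of_finrank_eq_succ (Fact.out : finrank ℝ E = n + 1)
  obtain ⟨v, hv⟩ := exists_norm_eq E zero_le_one
  have : FiniteDimensional ℝ E := .of_fact_finrank_eq_succ n
  have hrank : 1 < Module.rank ℝ (ℝ ∙ v)ᗮ := by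
    rw [← finrank_eq_rank, Submodule.finrank_orthogonal_span_singleton (n := n)
      (norm_ne_zero_iff.1 (by simp [hv]))]
    exact_mod_cast hn
  -- inverse stereographic projection maps this sphere of radius 2 onto the equator, oddly
  have hequator := isConnected_sphere hrank 0 zero_le_two
  obtain ⟨w, hw⟩ := exists_eq_zero_of_odd_on_isPreconnected continuous_neg neg_involutive
    hequator.isPreconnected (fun w hw => by simpa using hw) hequator.nonempty
    (g := fun w => f (stereoInvFun hv w) - f (-stereoInvFun hv w))
    (by have := continuous_stereoInvFun hv; fun_prop) fun w hw => by
      rw [stereoInvFun_neg_of_norm_eq_two hv (by simpa using hw), neg_neg, neg_sub]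
  exact ⟨_, (sub_eq_zero.1 hw).symm⟩

end Sphere

/-- Borsuk–Ulam theorem for S²: every continuous map S² → ℝ² identifies some
pair of antipodal points. -/
theorem borsuk_ulam_S2
    (f : Metric.sphere (0 : EuclideanSpace ℝ (Fin 3)) 1 → EuclideanSpace ℝ (Fin 2))
    (hf : Continuous f) :
    ∃ s : Metric.sphere (0 : EuclideanSpace ℝ (Fin 3)) 1, f (-s) = f s := by
  have : Fact (Module.finrank ℝ (EuclideanSpace ℝ (Fin 3)) = 2 + 1) := ⟨by simp⟩
  let e := Complex.orthonormalBasisOneI.repr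
  obtain ⟨s, hs⟩ := exists_map_neg_eq_map_of_finrank_eq le_rfl (f := e.symm ∘ f) (by fun_prop)
  exact ⟨s, e.symm.injective hs⟩
end

section
/- There is no antipode-preserving continuous map from the 2-sphere to the circle: there is no continuous map ψ : S² → S¹ satisfying ψ(-s) = -ψ(s) for all s ∈ S². -/
/-!
Compose `ψ` with the radial projection onto the sphere of the paraboloid `z = 1 - ‖v‖²`
over the plane; it sends the unit circle onto the equator, compatibly with `v ↦ -v`. The plane is simply connected, so the resulting map to the circle lifts
through `t ↦ exp (i t)` to a real function `g`. For `v` on the unit circle, oddness of `ψ` makes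
`d v = g (-v) - g v` an odd multiple of `π`, so `d` never vanishes there; but `d (-v) = -d v`, so by
connectedness of the unit circle `d` must vanish somewhere.
-/

open Metric NormedSpace

theorem Circle.exists_lift_exp {A : Type*} [TopologicalSpace A] [SimplyConnectedSpace A]
    [LocallyPathConnectedSpace A] (f : C(A, Circle)) :
    ∃ g : C(A, ℝ), ∀ a, Circle.exp (g a) = f a := by
  obtain ⟨a₀⟩ := (inferInstance : Nonempty A)
  obtain ⟨t, ht⟩ := Circle.exp_surjective (f a₀)
  obtain ⟨g, ⟨-, hg⟩, -⟩ := Circle.isCoveringMap_exp.existsUnique_continuousMap_lifts f a₀ t ht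
  exact ⟨g, congrFun hg⟩

theorem exists_map_neg_ne_neg_on_sphere {E : Type*} [NormedAddCommGroup E] [NormedSpace ℝ E]
    (hE : 1 < Module.rank ℝ E) {r : ℝ} (hr : 0 ≤ r) {f : E → Circle} (hf : Continuous f) :
    ∃ x ∈ sphere (0 : E) r, f (-x) ≠ -f x := by
  by_contra! hodd
  obtain ⟨g, hg⟩ := Circle.exists_lift_exp ⟨f, hf⟩
  set d : E → ℝ := fun x => g (-x) - g x
  have hd_neg (x : E) : d (-x) = -d x := by simp only [d, neg_neg, neg_sub]
  have hd_ne_zero : ∀ x ∈ sphere (0 : E) r, d x ≠ 0 := by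
    intro x hx hdx
    have h : Circle.exp (d x) = -1 := by
      simp only [d, Circle.exp_sub, hg, ContinuousMap.coe_mk, hodd x hx, neg_div, div_self']
    rw [hdx, Circle.exp_zero] at h
    have h' := congrArg ((↑) : Circle → ℂ) h
    norm_num at h'
  have hS := isConnected_sphere hE (0 : E) hr
  obtain ⟨x, hx⟩ := hS.nonempty
  have h0 : (0 : ℝ) ∈ Set.uIcc (d x) (d (-x)) := by
    rw [hd_neg, Set.mem_uIcc]
    rcases le_total (d x) 0 with h | h
    · exact Or.inl ⟨h, neg_nonneg.mpr h⟩
    · exact Or.inr ⟨neg_nonpos.mpr h, h⟩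
  obtain ⟨y, hy, hy0⟩ := ((hS.isPreconnected.image d (by fun_prop)).ordConnected.uIcc_subset
    ⟨x, hx, rfl⟩ ⟨-x, by simpa using hx, rfl⟩) h0
  exact hd_ne_zero y hy hy0

noncomputable def paraboloid (v : EuclideanSpace ℝ (Fin 2)) : EuclideanSpace ℝ (Fin 3) :=
  !₂[v 0, v 1, 1 - ‖v‖ ^ 2]

theorem paraboloid_ne_zero (v : EuclideanSpace ℝ (Fin 2)) : paraboloid v ≠ 0 := by
  intro h
  have h0 : v 0 = 0 := by simpa [paraboloid] using congrArg (· 0) h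
  have h1 : v 1 = 0 := by simpa [paraboloid] using congrArg (· 1) h
  have h2 : 1 - ‖v‖ ^ 2 = 0 := by simpa [paraboloid] using congrArg (· 2) h
  rw [EuclideanSpace.norm_eq, Fin.sum_univ_two, h0, h1] at h2
  norm_num at h2

theorem paraboloid_neg {v : EuclideanSpace ℝ (Fin 2)} (hv : ‖v‖ = 1) :
    paraboloid (-v) = -paraboloid v := by
  ext i; fin_cases i <;> simp [paraboloid, hv]

noncomputable def upperHemisphere (v : EuclideanSpace ℝ (Fin 2)) :
    sphere (0 : EuclideanSpace ℝ (Fin 3)) 1 :=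
  ⟨normalize (paraboloid v), mem_sphere_zero_iff_norm.2 (norm_normalize (paraboloid_ne_zero v))⟩

theorem continuous_upperHemisphere : Continuous upperHemisphere := by
  refine Continuous.subtype_mk ?_ _
  have hp : Continuous paraboloid := by unfold paraboloid; fun_prop
  exact (hp.norm.inv₀ fun v => norm_ne_zero_iff.2 (paraboloid_ne_zero v)).smul hp

theorem upperHemisphere_neg {v : EuclideanSpace ℝ (Fin 2)} (hv : ‖v‖ = 1) :
    upperHemisphere (-v) = -upperHemisphere v :=
  Subtype.ext <| by simp only [upperHemisphere, paraboloid_neg hv, normalize_neg, coe_neg_sphere]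

noncomputable def sphereToCircle (x : sphere (0 : EuclideanSpace ℝ (Fin 2)) 1) : Circle :=
  ⟨Complex.orthonormalBasisOneI.repr.symm x,
    mem_sphere_zero_iff_norm.2 <| by rw [LinearIsometryEquiv.norm_map, norm_eq_of_mem_sphere x]⟩

theorem continuous_sphereToCircle : Continuous sphereToCircle := by
  unfold sphereToCircle; fun_prop

theorem sphereToCircle_neg (x : sphere (0 : EuclideanSpace ℝ (Fin 2)) 1) :
    sphereToCircle (-x) = -sphereToCircle x :=
  Circle.ext <| by rw [Circle.coe_neg]; simp only [sphereToCircle, coe_neg_sphere, map_neg]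

/-- There is no antipode-preserving continuous map from the 2-sphere to the circle. -/
theorem no_odd_map_S2_to_S1 :
    ¬ ∃ ψ : Metric.sphere (0 : EuclideanSpace ℝ (Fin 3)) 1 →
        Metric.sphere (0 : EuclideanSpace ℝ (Fin 2)) 1,
      Continuous ψ ∧ ∀ s, ψ (-s) = -ψ s := by
  rintro ⟨ψ, hψ, hodd⟩
  have hrank : 1 < Module.rank ℝ (EuclideanSpace ℝ (Fin 2)) := by
    rw [← Module.finrank_eq_rank, finrank_euclideanSpace_fin]; norm_num
  obtain ⟨v, hv, hne⟩ := exists_map_neg_ne_neg_on_sphere hrank zero_le_one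
    (continuous_sphereToCircle.comp (hψ.comp continuous_upperHemisphere))
  exact hne <| by
    simp only [Function.comp_apply, upperHemisphere_neg (mem_sphere_zero_iff_norm.1 hv), hodd,
      sphereToCircle_neg]
end

section
/- An antipode-preserving continuous map of the circle is not null-homotopic: if φ : S¹ → S¹ is continuous and satisfies φ(-s) = -φ(s) for all s ∈ S¹, then φ is not homotopic to a constant map. -/
/-!
If `φ` were null-homotopic, lifting the homotopy along the covering map `ℝ → S¹`, `t ↦ e^{it}`,
would lift `φ` to a continuous `F : S¹ → ℝ`. The function `s ↦ F (-s) - F s` is odd, so by the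
intermediate value theorem on the connected circle it vanishes at some `s`; then
`φ s = φ (-s) = -φ s`, which is impossible on the unit circle.
-/

open Metric Function Set

namespace IsCoveringMap

variable {E X A : Type*} [TopologicalSpace E] [TopologicalSpace X] [TopologicalSpace A]
  {p : E → X}

theorem exists_lift_of_homotopic_const (cov : IsCoveringMap p) {f : C(A, X)} {e : E}
    (hf : f.Homotopic (.const A (p e))) : ∃ F : C(A, E), p ∘ F = f := by
  obtain ⟨H⟩ := hf.symm
  let G := cov.liftHomotopy H.toContinuousMap (.const A e) fun a ↦ H.apply_zero a
  refine ⟨G.curry 1, funext fun a ↦ ?_⟩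
  simpa using congrFun (cov.liftHomotopy_lifts H.toContinuousMap _ _) (1, a)

end IsCoveringMap

theorem Function.Involutive.exists_apply_eq_apply {X : Type*} [TopologicalSpace X]
    [ConnectedSpace X] {σ : X → X} (hσ : Involutive σ) (hσc : Continuous σ) {f : X → ℝ}
    (hf : Continuous f) : ∃ x, f (σ x) = f x := by
  obtain ⟨x₀⟩ := ‹ConnectedSpace X›.toNonempty
  set g : X → ℝ := fun x ↦ f (σ x) - f x
  have hg : Continuous g := (hf.comp hσc).sub hf
  have hg_odd : g (σ x₀) = -g x₀ := by simp only [g, hσ x₀]; ring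
  suffices (0 : ℝ) ∈ range g from this.imp fun x hx ↦ sub_eq_zero.mp hx
  rcases le_total (g x₀) 0 with h | h
  · exact intermediate_value_univ x₀ (σ x₀) hg ⟨h, by linarith⟩
  · exact intermediate_value_univ (σ x₀) x₀ hg ⟨by linarith, h⟩

noncomputable def Circle.homeomorphUnitSphereEuclideanSpace :
    Circle ≃ₜ sphere (0 : EuclideanSpace ℝ (Fin 2)) 1 :=
  Complex.orthonormalBasisOneI.repr.toHomeomorph.subtype fun z ↦ by
    simp [Submonoid.unitSphere]

/-- An antipode-preserving continuous self-map of the circle is not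
null-homotopic. -/
theorem odd_circle_map_not_nullhomotopic
    (φ : C(Metric.sphere (0 : EuclideanSpace ℝ (Fin 2)) 1,
          Metric.sphere (0 : EuclideanSpace ℝ (Fin 2)) 1))
    (hφ : ∀ s, φ (-s) = -φ s) :
    ¬ ∃ y, φ.Homotopic (ContinuousMap.const _ y) := by
  rintro ⟨y, hy⟩
  set e := Circle.homeomorphUnitSphereEuclideanSpace
  have : ConnectedSpace (sphere (0 : EuclideanSpace ℝ (Fin 2)) 1) :=
    e.surjective.connectedSpace e.continuous
  obtain ⟨t, rfl⟩ := (e.surjective.comp Circle.exp_surjective) y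
  obtain ⟨F, hF⟩ :=
    (Circle.isCoveringMap_exp.homeomorph_comp e).exists_lift_of_homotopic_const hy
  obtain ⟨s, hs⟩ := neg_involutive.exists_apply_eq_apply continuous_neg F.continuous
  apply ne_neg_of_mem_unit_sphere ℝ (φ s)
  rw [← hφ, ← hF]
  simp only [comp_apply, hs]
end

section
/- Every antipode-preserving continuous map of the 2-sphere is surjective: if g : S² → S² is continuous and satisfies g(-s) = -g(s) for all s ∈ S², then g is onto. -/
/-!
If `g` misses a point `p`, composing `g` with a linear map `ℝ³ → ℂ` whose kernel is `ℝ p` gives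
an odd continuous map `z : S² → ℂ` without zeros. Pull `z` back along spherical coordinates to
the simply connected plane and take a continuous logarithm `L`. There the antipodal map becomes
`(s, t) ↦ (1 - s, t + 1)`, so oddness forces `L (1 - s, t + 1) - L (s, t)` to be a constant `c`
with `exp c = -1`. Applying the antipodal map twice to `(0, 0)` gives `L (0, 2) = L (0, 0) + 2c`,
but the line `s = 0` is collapsed to the north pole, along which `L` is constant; hence `c = 0`.
-/

open Metric Real

theorem exists_continuous_exp_eq {X : Type*} [TopologicalSpace X] [SimplyConnectedSpace X]
    [LocallyPathConnectedSpace X] {F : X → ℂ} (hF : Continuous F) (hF0 : ∀ x, F x ≠ 0) :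
    ∃ L : X → ℂ, Continuous L ∧ ∀ x, Complex.exp (L x) = F x := by
  obtain ⟨x₀⟩ := (inferInstance : Nonempty X)
  obtain ⟨L, ⟨-, hL⟩, -⟩ := Complex.isCoveringMapOn_exp.existsUnique_continuousMap_lifts ⟨F, hF⟩
    (a₀ := x₀) (Complex.exp_log (hF0 x₀)) hF0
  exact ⟨L, L.continuous, congrFun hL⟩

theorem Continuous.apply_eq_of_exp_eq_const {X : Type*} [TopologicalSpace X] [PreconnectedSpace X]
    {L : X → ℂ} (hL : Continuous L) {w : ℂ} (h : ∀ x, Complex.exp (L x) = w) (x y : X) :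
    L x = L y :=
  (congrFun (Complex.isCoveringMap_exp.eq_of_comp_eq hL continuous_const
    (funext fun z ↦ Subtype.ext ((h z).trans (h x).symm)) x rfl) y).symm

/-- `(s, t) ↦ (1 - s, t + 1)` is the antipodal map in spherical coordinates, and `{0} × ℝ` is
collapsed to the north pole. -/
theorem exists_eq_zero_of_map_one_sub_add_one {F : ℝ × ℝ → ℂ} (hF : Continuous F)
    (hanti : ∀ s t, F (1 - s, t + 1) = -F (s, t)) (haxis : ∀ t, F (0, t) = F (0, 0)) :
    ∃ p, F p = 0 := by
  by_contra! hF0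
  obtain ⟨L, hL, hLF⟩ := exists_continuous_exp_eq hF hF0
  set D : ℝ × ℝ → ℂ := fun p ↦ L (1 - p.1, p.2 + 1) - L p with hD_def
  have hD : ∀ p, Complex.exp (D p) = -1 := fun p ↦ by
    rw [hD_def, Complex.exp_sub, hLF, hLF, hanti, neg_div, div_self (hF0 p)]
  have hD_const := (show Continuous D by fun_prop).apply_eq_of_exp_eq_const hD
  have hL_axis : L (0, 2) = L (0, 0) :=
    (hL.comp (Continuous.prodMk_right 0)).apply_eq_of_exp_eq_const (w := F (0, 0))
      (fun t ↦ by simp [hLF, haxis]) 2 0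
  have hD_zero : D (0, 0) = 0 := by
    have : D (1, 1) + D (0, 0) = L (0, 2) - L (0, 0) := by norm_num [hD_def]
    rw [hL_axis, sub_self, hD_const (1, 1) (0, 0)] at this
    simpa using this
  have := hD (0, 0)
  rw [hD_zero, Complex.exp_zero] at this
  norm_num at this

noncomputable def sphericalCoords (p : ℝ × ℝ) : EuclideanSpace ℝ (Fin 3) :=
  !₂[sin (π * p.1) * cos (π * p.2), sin (π * p.1) * sin (π * p.2), cos (π * p.1)]

theorem continuous_sphericalCoords : Continuous sphericalCoords := by
  unfold sphericalCoords
  fun_prop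

theorem norm_sphericalCoords (p : ℝ × ℝ) : ‖sphericalCoords p‖ = 1 := by
  rw [EuclideanSpace.norm_eq, Real.sqrt_eq_one]
  simp only [sphericalCoords, Real.norm_eq_abs, sq_abs, Fin.sum_univ_three, Fin.isValue,
    Matrix.cons_val_zero, Matrix.cons_val_one, Matrix.cons_val]
  nlinarith [sin_sq_add_cos_sq (π * p.1), sin_sq_add_cos_sq (π * p.2)]

theorem sphericalCoords_one_sub_add_one (s t : ℝ) :
    sphericalCoords (1 - s, t + 1) = -sphericalCoords (s, t) := by
  ext i
  fin_cases i <;>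
    simp [sphericalCoords, mul_sub, mul_add, sin_pi_sub, cos_pi_sub, sin_add_pi, cos_add_pi]

theorem sphericalCoords_zero_fst (t : ℝ) : sphericalCoords (0, t) = sphericalCoords (0, 0) := by
  ext i
  fin_cases i <;> simp [sphericalCoords]

theorem exists_eq_zero_of_continuous_odd {z : sphere (0 : EuclideanSpace ℝ (Fin 3)) 1 → ℂ}
    (hz : Continuous z) (hodd : ∀ x, z (-x) = -z x) : ∃ x, z x = 0 := by
  let σ : ℝ × ℝ → sphere (0 : EuclideanSpace ℝ (Fin 3)) 1 :=
    fun p ↦ ⟨sphericalCoords p, by simp [norm_sphericalCoords]⟩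
  obtain ⟨p, hp⟩ := exists_eq_zero_of_map_one_sub_add_one (F := z ∘ σ)
    (hz.comp (continuous_sphericalCoords.subtype_mk _))
    (fun s t ↦ by
      simp only [Function.comp_apply, ← hodd]
      congr 1
      exact Subtype.ext (sphericalCoords_one_sub_add_one s t))
    (fun t ↦ congrArg z (Subtype.ext (sphericalCoords_zero_fst t)))
  exact ⟨σ p, hp⟩

theorem exists_linearMap_complex_ker_eq_span {E : Type*} [AddCommGroup E] [Module ℝ E]
    [FiniteDimensional ℝ E] (hE : Module.finrank ℝ E = 3) {p : E} (hp : p ≠ 0) :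
    ∃ φ : E →ₗ[ℝ] ℂ, LinearMap.ker φ = ℝ ∙ p := by
  have hrank : Module.finrank ℝ (E ⧸ ℝ ∙ p) = Module.finrank ℝ ℂ := by
    have := (ℝ ∙ p).finrank_quotient_add_finrank
    rw [finrank_span_singleton hp, hE] at this
    rw [Complex.finrank_real_complex]
    omega
  exact ⟨(LinearEquiv.ofFinrankEq _ _ hrank).toLinearMap ∘ₗ (ℝ ∙ p).mkQ,
    by rw [LinearEquiv.ker_comp, Submodule.ker_mkQ]⟩

theorem eq_or_eq_neg_of_mem_span_singleton {E : Type*} [NormedAddCommGroup E] [NormedSpace ℝ E]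
    {p v : E} (hp : ‖p‖ = 1) (hv : ‖v‖ = 1) (h : v ∈ ℝ ∙ p) : v = p ∨ v = -p := by
  obtain ⟨c, rfl⟩ := Submodule.mem_span_singleton.mp h
  rw [norm_smul, hp, mul_one, Real.norm_eq_abs] at hv
  rcases (abs_eq zero_le_one).mp hv with rfl | rfl <;> simp

/-- Every antipode-preserving continuous self-map of the 2-sphere is surjective. -/
theorem odd_S2_map_surjective
    (g : Metric.sphere (0 : EuclideanSpace ℝ (Fin 3)) 1 →
        Metric.sphere (0 : EuclideanSpace ℝ (Fin 3)) 1)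
    (hg : Continuous g) (hodd : ∀ s, g (-s) = -g s) :
    Function.Surjective g := by
  intro p
  obtain ⟨φ, hφ⟩ := exists_linearMap_complex_ker_eq_span finrank_euclideanSpace_fin
    (ne_zero_of_mem_unit_sphere p)
  obtain ⟨x, hx⟩ := exists_eq_zero_of_continuous_odd (z := fun x ↦ φ (g x))
    (φ.continuous_of_finiteDimensional.comp (continuous_subtype_val.comp hg))
    (fun x ↦ by rw [hodd, coe_neg_sphere, map_neg])
  have hgx : (g x : EuclideanSpace ℝ (Fin 3)) ∈ ℝ ∙ (p : EuclideanSpace ℝ (Fin 3)) := hφ ▸ hx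
  rcases eq_or_eq_neg_of_mem_span_singleton (norm_eq_of_mem_sphere p)
    (norm_eq_of_mem_sphere (g x)) hgx with h | h
  · exact ⟨x, Subtype.ext h⟩
  · exact ⟨-x, Subtype.ext (by rw [hodd, coe_neg_sphere, h, neg_neg])⟩
end

section
/- (Non-triviality of γ⊕γ⊕ε over ℝP², concrete form) There is no continuous matrix-valued map Ω : S² → Matrix (Fin 3) (Fin 3) ℝ such that Ω(s) is invertible for every s ∈ S², the entries in the first two columns are odd functions (Ω(-s)ᵢⱼ = -Ω(s)ᵢⱼ for j = 0, 1), and the entries in the third column are even functions (Ω(-s)ᵢ₂ = Ω(s)ᵢ₂), for all s ∈ S² and all rows i. -/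
/-!
Gram–Schmidt turns the first two columns into an odd orthonormal pair of fields, i.e. anticommuting
square roots `e₁ s`, `e₂ s` of `-1` in `ℍ`. Along the meridians from the north pole `N` to the
equator, the frame can be conjugated continuously back to the frame at `N`: for nearby frames the
quaternion `1 - ∑ eᵢ(s') eᵢ(s)` is nonzero and conjugates one into the other, and products of these
over short steps give `Q z` with `Q z * eᵢ N = eᵢ z * Q z` (a lift through `S³ → SO(3)`). For
antipodal equator points, `Q (-z)⁻¹ * Q z` anticommutes with `e₁ N` and `e₂ N`, so its product
with `e₁ N * e₂ N` is a real number `g z ≠ 0`, and `g (-z) * g z = -1`: impossible for a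
continuous function on the connected circle.
-/

open Quaternion Metric Real unitInterval

namespace InnerProductSpace

variable {𝕜 E ι : Type*} [RCLike 𝕜] [NormedAddCommGroup E] [InnerProductSpace 𝕜 E]
  [LinearOrder ι] [LocallyFiniteOrderBot ι] [WellFoundedLT ι]

theorem gramSchmidt_neg (f : ι → E) (n : ι) : gramSchmidt 𝕜 (-f) n = -gramSchmidt 𝕜 f n := by
  induction n using WellFoundedLT.induction with
  | ind n ih =>
    have hsum : ∑ i ∈ Finset.Iio n, (𝕜 ∙ gramSchmidt 𝕜 (-f) i).starProjection ((-f) n) =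
        -∑ i ∈ Finset.Iio n, (𝕜 ∙ gramSchmidt 𝕜 f i).starProjection (f n) := by
      rw [← Finset.sum_neg_distrib]
      refine Finset.sum_congr rfl fun i hi => ?_
      simp [ih i (Finset.mem_Iio.1 hi), ← Set.neg_singleton, Submodule.span_neg]
    rw [gramSchmidt_def 𝕜 f, gramSchmidt_def 𝕜 (-f), hsum, Pi.neg_apply]
    abel

theorem gramSchmidtNormed_neg (f : ι → E) (n : ι) :
    gramSchmidtNormed 𝕜 (-f) n = -gramSchmidtNormed 𝕜 f n := by
  simp [gramSchmidtNormed, gramSchmidt_neg]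

theorem continuous_gramSchmidt {X : Type*} [TopologicalSpace X] {f : X → ι → E}
    (hf : Continuous f) (h₀ : ∀ x, LinearIndependent 𝕜 (f x)) (n : ι) :
    Continuous fun x => gramSchmidt 𝕜 (f x) n := by
  induction n using WellFoundedLT.induction with
  | ind n ih =>
    have hdef : ∀ x, gramSchmidt 𝕜 (f x) n = f x n - ∑ i ∈ Finset.Iio n,
        (inner 𝕜 (gramSchmidt 𝕜 (f x) i) (f x n) / (‖gramSchmidt 𝕜 (f x) i‖ : 𝕜) ^ 2) •
          gramSchmidt 𝕜 (f x) i := fun x => eq_sub_of_add_eq (gramSchmidt_def'' 𝕜 (f x) n).symm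
    simp only [hdef]
    refine (continuous_apply n |>.comp hf).sub (continuous_finsetSum _ fun i hi => ?_)
    have hi' := ih i (Finset.mem_Iio.1 hi)
    refine (Continuous.div (hi'.inner (continuous_apply n |>.comp hf))
      ((RCLike.continuous_ofReal.comp hi'.norm).pow 2) fun x => ?_).smul hi'
    simpa using gramSchmidt_ne_zero i (h₀ x)

theorem continuous_gramSchmidtNormed {X : Type*} [TopologicalSpace X] {f : X → ι → E}
    (hf : Continuous f) (h₀ : ∀ x, LinearIndependent 𝕜 (f x)) (n : ι) :
    Continuous fun x => gramSchmidtNormed 𝕜 (f x) n := by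
  have h := continuous_gramSchmidt hf h₀ n
  refine ((RCLike.continuous_ofReal.comp h.norm).inv₀ fun x => ?_).smul h
  simpa using gramSchmidt_ne_zero n (h₀ x)

end InnerProductSpace

open InnerProductSpace

structure IsQuaternionPair {R : Type*} [Ring R] (a b : R) : Prop where
  mul_self_left : a * a = -1
  mul_self_right : b * b = -1
  anticomm : b * a = -(a * b)

/- For quaternion pairs in `ℍ`, if a unit quaternion `u` conjugates `a` to `a'` and `b` to `b'`,
this is `4 * u.re * u`: a multiple of `u`, computed without knowing `u`. -/
def intertwiner {R : Type*} [Ring R] (a b a' b' : R) : R :=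
  1 - (a' * a + b' * b + a' * b' * (a * b))

namespace IsQuaternionPair

variable {R : Type*} [Ring R] {a b a' b' : R}

lemma mul_mul_self_left (h : IsQuaternionPair a b) (x : R) : a * (a * x) = -x := by
  rw [← mul_assoc, h.mul_self_left, neg_one_mul]

lemma mul_mul_self_right (h : IsQuaternionPair a b) (x : R) : b * (b * x) = -x := by
  rw [← mul_assoc, h.mul_self_right, neg_one_mul]

lemma anticomm_mul (h : IsQuaternionPair a b) (x : R) : b * (a * x) = -(a * (b * x)) := by
  rw [← mul_assoc, h.anticomm, neg_mul, mul_assoc]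

lemma mul_self_mul (h : IsQuaternionPair a b) : a * b * (a * b) = -1 := by
  simp only [mul_assoc, h.anticomm_mul, mul_neg, h.mul_mul_self_left, h.mul_self_right, neg_neg]

lemma semiconjBy_mul_left (h : IsQuaternionPair a b) : SemiconjBy (a * b) a (-a) := by
  simp only [SemiconjBy, mul_assoc, h.anticomm, mul_neg, neg_mul, h.mul_mul_self_left, neg_neg]

lemma semiconjBy_mul_right (h : IsQuaternionPair a b) : SemiconjBy (a * b) b (-b) := by
  simp only [SemiconjBy, mul_assoc, h.mul_self_right, neg_mul, h.anticomm_mul, mul_neg, mul_one,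
    neg_neg]

lemma semiconjBy_intertwiner_left (h : IsQuaternionPair a b) (h' : IsQuaternionPair a' b') :
    SemiconjBy (intertwiner a b a' b') a a' := by
  simp only [SemiconjBy, intertwiner, mul_sub, sub_mul, mul_add, add_mul, mul_assoc, one_mul,
    mul_one, mul_neg, h.mul_self_left, h.anticomm, h.mul_mul_self_left, h'.mul_mul_self_left,
    neg_neg]
  abel

lemma semiconjBy_intertwiner_right (h : IsQuaternionPair a b) (h' : IsQuaternionPair a' b') :
    SemiconjBy (intertwiner a b a' b') b b' := by
  simp only [SemiconjBy, intertwiner, mul_sub, sub_mul, mul_add, add_mul, mul_assoc, one_mul,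
    mul_one, mul_neg, h.mul_self_right, h'.mul_mul_self_right, h'.anticomm_mul, neg_neg]
  abel

lemma intertwiner_self (h : IsQuaternionPair a b) : intertwiner a b a b = 4 := by
  simp only [intertwiner, mul_assoc, h.mul_self_left, h.mul_self_right, h.mul_mul_self_left,
    h.anticomm_mul, mul_neg, neg_neg]
  norm_num

end IsQuaternionPair

instance : CharZero ℍ[ℝ] := charZero_of_injective_algebraMap (algebraMap ℝ _).injective

namespace Quaternion

lemma re_eq_zero_of_mul_self_eq_neg_one {a : ℍ[ℝ]} (h : a * a = -1) : a.re = 0 := by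
  have hn : normSq a * normSq a = 1 := by rw [← map_mul, h, normSq_neg, map_one]
  have hn1 : normSq a = 1 := by nlinarith [normSq_nonneg (a := a)]
  rw [← sq_eq_neg_normSq, hn1, sq, h, coe_one]

lemma eq_re_of_commute {a b x : ℍ[ℝ]} (hab : IsQuaternionPair a b) (ha : Commute x a)
    (hb : Commute x b) : x = x.re := by
  have him : x.im = x - x.re := eq_sub_of_add_eq' (re_add_im x)
  have hxa : Commute x.im a := him ▸ ha.sub_left (coe_commute _ _)
  have hxb : Commute x.im b := him ▸ hb.sub_left (coe_commute _ _)
  have hpure : star a = -a := star_eq_neg.2 (re_eq_zero_of_mul_self_eq_neg_one hab.mul_self_left)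
  -- a product of two commuting pure quaternions is self-adjoint, hence real
  obtain ⟨r, hr⟩ : ∃ r : ℝ, x.im * a = r :=
    ⟨_, star_eq_self.1 (by rw [star_mul, hpure, star_im, neg_mul_neg, hxa.eq])⟩
  have hxr : x.im = -r * a := by
    rw [← hr, neg_mul, mul_assoc, hab.mul_self_left, mul_neg_one, neg_neg]
  have hr0 : r = 0 := by
    by_contra hr0
    have h : (r : ℍ[ℝ]) * (a * b) = r * (b * a) := by
      have h := hxb.eq
      rw [hxr] at h
      calc (r : ℍ[ℝ]) * (a * b) = -(-r * a * b) := by noncomm_ring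
        _ = -(b * (-r * a)) := by rw [h]
        _ = b * r * a := by noncomm_ring
        _ = r * (b * a) := by rw [← (coe_commute r b).eq, mul_assoc]
    rw [hab.anticomm, mul_neg, self_eq_neg, mul_eq_zero] at h
    have := hab.mul_self_mul
    exact h.elim (fun h => hr0 (by simpa using congrArg (·.re) h)) fun h0 => by simp [h0] at this
  rw [← re_add_im x, hxr, hr0]
  simp

lemma mul_mul_eq_re_of_semiconjBy_neg {a b v : ℍ[ℝ]} (hab : IsQuaternionPair a b)
    (ha : SemiconjBy v a (-a)) (hb : SemiconjBy v b (-b)) : v * (a * b) = (v * (a * b)).re := by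
  refine eq_re_of_commute hab ?_ ?_
  · have h := ha.neg_right.mul_left hab.semiconjBy_mul_left
    rwa [neg_neg] at h
  · have h := hb.neg_right.mul_left hab.semiconjBy_mul_right
    rwa [neg_neg] at h

lemma isQuaternionPair_of_orthonormal {ι : Type*} {v : ι → ℍ[ℝ]} (hv : Orthonormal ℝ v)
    (hre : ∀ i, (v i).re = 0) {i j : ι} (hij : i ≠ j) : IsQuaternionPair (v i) (v j) := by
  have hsq : ∀ k, v k * v k = -1 := fun k => by
    rw [← sq, sq_eq_neg_normSq.2 (hre k), normSq_eq_norm_mul_self, hv.1 k]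
    simp
  refine ⟨hsq i, hsq j, ?_⟩
  have hinner : (v i * v j).re = 0 := by
    have : inner ℝ (v i) (v j) = 0 := hv.2 hij
    rwa [inner_def, star_eq_neg.2 (hre j), mul_neg, re_neg, neg_eq_zero] at this
  have h := self_add_star (v i * v j)
  rw [hinner, star_mul, star_eq_neg.2 (hre i), star_eq_neg.2 (hre j), neg_mul_neg] at h
  simpa [add_eq_zero_iff_eq_neg'] using h

lemma isQuaternionPair_gramSchmidtNormed {ι : Type*} [LinearOrder ι] [LocallyFiniteOrderBot ι]
    [WellFoundedLT ι] {f : ι → ℍ[ℝ]} (hf : LinearIndependent ℝ f) (hre : ∀ i, (f i).re = 0)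
    {i j : ι} (hij : i ≠ j) :
    IsQuaternionPair (gramSchmidtNormed ℝ f i) (gramSchmidtNormed ℝ f j) := by
  refine isQuaternionPair_of_orthonormal (gramSchmidtNormed_orthonormal hf) (fun k => ?_) hij
  have hspan : Submodule.span ℝ (Set.range f) ≤
      LinearMap.ker (show ℍ[ℝ] →ₗ[ℝ] ℝ from QuaternionAlgebra.reₗ _ _ _) :=
    Submodule.span_le.2 <| Set.range_subset_iff.2 fun i => LinearMap.mem_ker.2 (hre i)
  have hmem : gramSchmidtNormed ℝ f k ∈ Submodule.span ℝ (Set.range f) := by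
    rw [← span_gramSchmidt ℝ f, ← span_gramSchmidtNormed_range]
    exact Submodule.subset_span (Set.mem_range_self k)
  exact LinearMap.mem_ker.1 (hspan hmem)

end Quaternion

lemma IsOpen.exists_dist_lt_mem_of_diagonal_subset {X : Type*} [PseudoMetricSpace X]
    [CompactSpace X] {U : Set (X × X)} (hU : IsOpen U) (hdiag : Set.diagonal X ⊆ U) :
    ∃ δ > 0, ∀ x y, dist x y < δ → (x, y) ∈ U := by
  obtain ⟨δ, hδ, h⟩ := Metric.mem_uniformity_dist.1 <|
    nhdsSet_diagonal_eq_uniformity (α := X) ▸ hU.mem_nhdsSet.2 hdiag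
  exact ⟨δ, hδ, fun x y hxy => h hxy⟩

lemma exists_eq_zero_of_mul_neg {X : Type*} [TopologicalSpace X] [PreconnectedSpace X]
    {g : X → ℝ} (hg : Continuous g) {x y : X} (h : g x * g y < 0) : ∃ z, g z = 0 := by
  rcases le_total (g x) 0 with hx | hx
  · exact mem_range_of_exists_le_of_exists_ge hg ⟨x, hx⟩ ⟨y, by nlinarith⟩
  · exact mem_range_of_exists_le_of_exists_ge hg ⟨y, by nlinarith⟩ ⟨x, hx⟩

theorem exists_continuous_semiconjBy_of_homotopy {Z : Type*} [PseudoMetricSpace Z]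
    [CompactSpace Z] {a b : I × Z → ℍ[ℝ]} (ha : Continuous a) (hb : Continuous b)
    (hab : ∀ p, IsQuaternionPair (a p) (b p)) :
    ∃ Q : Z → ℍ[ℝ], Continuous Q ∧ ∀ z, Q z ≠ 0 ∧
      SemiconjBy (Q z) (a (0, z)) (a (1, z)) ∧ SemiconjBy (Q z) (b (0, z)) (b (1, z)) := by
  let T : (I × Z) × (I × Z) → ℍ[ℝ] := fun pq => intertwiner (a pq.1) (b pq.1) (a pq.2) (b pq.2)
  have hT : Continuous T := by simp only [T, intertwiner]; fun_prop
  have hdiag : Set.diagonal (I × Z) ⊆ {pq | T pq ≠ 0} := by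
    rintro ⟨p, q⟩ (rfl : p = q)
    simp [T, (hab p).intertwiner_self]
  obtain ⟨δ, hδ, hT0⟩ :=
    (isOpen_ne_fun hT continuous_const).exists_dist_lt_mem_of_diagonal_subset hdiag
  obtain ⟨N, hN⟩ := exists_nat_one_div_lt hδ
  let t : ℕ → I := fun k => Set.projIcc 0 1 zero_le_one (k / (N + 1))
  have ht : ∀ k (z : Z), dist (t k, z) (t (k + 1), z) < δ := by
    intro k z
    rw [Prod.dist_eq, dist_self, max_eq_left dist_nonneg, Subtype.dist_eq, Real.dist_eq]
    refine (Set.abs_projIcc_sub_projIcc zero_le_one).trans_lt ?_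
    rw [abs_sub_comm, Nat.cast_succ, add_div, add_sub_cancel_left, abs_of_pos (by positivity)]
    exact_mod_cast hN
  have hpartial : ∀ k, ∃ Q : Z → ℍ[ℝ], Continuous Q ∧ ∀ z, Q z ≠ 0 ∧
      SemiconjBy (Q z) (a (0, z)) (a (t k, z)) ∧ SemiconjBy (Q z) (b (0, z)) (b (t k, z)) := by
    intro k
    induction k with
    | zero =>
      refine ⟨1, continuous_const, fun z => ⟨one_ne_zero, ?_, ?_⟩⟩ <;>
        simp [t, SemiconjBy]
    | succ k ih =>
      obtain ⟨Q, hQ, hQz⟩ := ih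
      refine ⟨fun z => T ((t k, z), (t (k + 1), z)) * Q z, by fun_prop, fun z => ⟨?_, ?_, ?_⟩⟩
      · exact mul_ne_zero (hT0 _ _ (ht k z)) (hQz z).1
      · exact ((hab _).semiconjBy_intertwiner_left (hab _)).mul_left (hQz z).2.1
      · exact ((hab _).semiconjBy_intertwiner_right (hab _)).mul_left (hQz z).2.2
  have htN : t (N + 1) = 1 := by
    simp only [t]
    rw [Nat.cast_succ, div_self (by positivity), Set.projIcc_right]
    rfl
  obtain ⟨Q, hQ, hQz⟩ := hpartial (N + 1)
  exact ⟨Q, hQ, by simpa only [htN] using hQz⟩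

theorem not_exists_continuous_semiconjBy_odd {Z : Type*} [TopologicalSpace Z] [ConnectedSpace Z]
    [InvolutiveNeg Z] [ContinuousNeg Z] {c₁ c₂ : ℍ[ℝ]} (hc : IsQuaternionPair c₁ c₂)
    {a b : Z → ℍ[ℝ]} (ha : ∀ z, a (-z) = -a z) (hb : ∀ z, b (-z) = -b z) :
    ¬ ∃ Q : Z → ℍ[ℝ], Continuous Q ∧ ∀ z, Q z ≠ 0 ∧
      SemiconjBy (Q z) c₁ (a z) ∧ SemiconjBy (Q z) c₂ (b z) := by
  rintro ⟨Q, hQ, hQz⟩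
  let V : Z → ℍ[ℝ] := fun z => (Q (-z))⁻¹ * Q z
  have hV : ∀ {c : ℍ[ℝ]} {e : Z → ℍ[ℝ]}, (∀ z, e (-z) = -e z) →
      (∀ z, SemiconjBy (Q z) c (e z)) → ∀ z, SemiconjBy (V z) c (-c) := fun he hQe z => by
    have h := (hQe (-z)).neg_right
    rw [he, neg_neg] at h
    exact h.inv_symm_left₀.mul_left (hQe z)
  have hV₁ := hV ha fun z => (hQz z).2.1
  have hV₂ := hV hb fun z => (hQz z).2.2
  have hV₃ : ∀ z, Commute (V z) (c₁ * c₂) := fun z => by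
    have h := (hV₁ z).mul_right (hV₂ z)
    rwa [neg_mul_neg] at h
  let g : Z → ℝ := fun z => (V z * (c₁ * c₂)).re
  have hg : ∀ z, V z * (c₁ * c₂) = g z := fun z =>
    mul_mul_eq_re_of_semiconjBy_neg hc (hV₁ z) (hV₂ z)
  have hV0 : ∀ z, V z ≠ 0 := fun z => mul_ne_zero (inv_ne_zero (hQz _).1) (hQz z).1
  have hg0 : ∀ z, g z ≠ 0 := fun z h => by
    have := hg z
    rw [h, Quaternion.coe_zero, mul_eq_zero] at this
    exact this.elim (hV0 z) fun h0 => by simpa [h0] using hc.mul_self_mul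
  have hgg : ∀ z, g (-z) * g z = -1 := fun z => by
    have hVneg : V (-z) = (V z)⁻¹ := by simp [V, mul_inv_rev]
    have : ((g (-z) * g z : ℝ) : ℍ[ℝ]) = ((-1 : ℝ) : ℍ[ℝ]) := by
      rw [coe_mul, ← hg, ← hg, hVneg, mul_assoc, ← mul_assoc (c₁ * c₂), ← (hV₃ z).eq,
        mul_assoc, ← mul_assoc, inv_mul_cancel₀ (hV0 z), one_mul, hc.mul_self_mul]
      simp
    exact coe_injective this
  have hgc : Continuous g := continuous_re.comp <|
    (((hQ.comp continuous_neg).inv₀ fun z => (hQz _).1).mul hQ).mul continuous_const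
  obtain ⟨z₀⟩ := ‹ConnectedSpace Z›.toNonempty
  obtain ⟨z, hz⟩ := exists_eq_zero_of_mul_neg hgc (hgg z₀ ▸ neg_one_lt_zero)
  exact hg0 z hz

local notation "𝕊²" => sphere (0 : EuclideanSpace ℝ (Fin 3)) 1

noncomputable def meridian (p : I × Circle) : 𝕊² :=
  ⟨!₂[sin (π / 2 * p.1) * (p.2 : ℂ).re, sin (π / 2 * p.1) * (p.2 : ℂ).im, cos (π / 2 * p.1)], by
    rw [mem_sphere_zero_iff_norm, EuclideanSpace.norm_eq, Fin.sum_univ_three, sqrt_eq_one]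
    have hz : (p.2 : ℂ).re ^ 2 + (p.2 : ℂ).im ^ 2 = 1 := by
      simpa [Complex.normSq_apply, sq] using Circle.normSq_coe p.2
    simp only [Matrix.cons_val_zero, Matrix.cons_val_one, Matrix.cons_val, Real.norm_eq_abs,
      sq_abs]
    linear_combination sin (π / 2 * p.1) ^ 2 * hz + sin_sq_add_cos_sq (π / 2 * p.1)⟩

lemma continuous_meridian : Continuous meridian := by
  refine Continuous.subtype_mk ?_ _
  fun_prop

lemma meridian_zero (z : Circle) : meridian (0, z) = meridian (0, 1) := by
  ext i
  fin_cases i <;> simp [meridian]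

lemma meridian_one_neg (z : Circle) : meridian (1, -z) = -meridian (1, z) := by
  ext i
  fin_cases i <;> simp [meridian]

theorem not_exists_odd_quaternionPair_on_sphere :
    ¬ ∃ e₁ e₂ : 𝕊² → ℍ[ℝ], Continuous e₁ ∧ Continuous e₂ ∧
      (∀ s, IsQuaternionPair (e₁ s) (e₂ s)) ∧ (∀ s, e₁ (-s) = -e₁ s) ∧ ∀ s, e₂ (-s) = -e₂ s := by
  rintro ⟨e₁, e₂, h₁, h₂, hpair, hodd₁, hodd₂⟩
  obtain ⟨Q, hQ, hQz⟩ := exists_continuous_semiconjBy_of_homotopy (h₁.comp continuous_meridian)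
    (h₂.comp continuous_meridian) fun p => hpair (meridian p)
  refine not_exists_continuous_semiconjBy_odd (hpair (meridian (0, 1)))
    (a := fun z => e₁ (meridian (1, z))) (b := fun z => e₂ (meridian (1, z)))
    (fun z => by simp only [meridian_one_neg, hodd₁])
    (fun z => by simp only [meridian_one_neg, hodd₂]) ⟨Q, hQ, fun z => ?_⟩
  simpa only [Function.comp_apply, meridian_zero z] using hQz z

noncomputable def pureQuat : (Fin 3 → ℝ) →ₗ[ℝ] ℍ[ℝ] where
  toFun v := ⟨0, v 0, v 1, v 2⟩
  map_add' _ _ := Quaternion.ext _ _ (add_zero 0).symm rfl rfl rfl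
  map_smul' c _ := Quaternion.ext _ _ (mul_zero c).symm rfl rfl rfl

lemma ker_pureQuat : LinearMap.ker pureQuat = ⊥ := by
  refine LinearMap.ker_eq_bot'.2 fun v hv => ?_
  have h₀ := congrArg (·.imI) hv
  have h₁ := congrArg (·.imJ) hv
  have h₂ := congrArg (·.imK) hv
  ext i
  fin_cases i <;> assumption

/-- Non-triviality of γ⊕γ⊕ε over ℝP² (concrete form): there is no continuous
family of invertible 3×3 real matrices over S² whose first two columns are odd
and whose third column is even. -/
theorem no_invertible_odd_odd_even_matrix_on_S2 :
    ¬ ∃ Ω : Metric.sphere (0 : EuclideanSpace ℝ (Fin 3)) 1 →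
        Matrix (Fin 3) (Fin 3) ℝ,
      Continuous Ω ∧
      (∀ s, IsUnit (Ω s)) ∧
      (∀ s, ∀ i : Fin 3, Ω (-s) i 0 = -Ω s i 0) ∧
      (∀ s, ∀ i : Fin 3, Ω (-s) i 1 = -Ω s i 1) ∧
      (∀ s, ∀ i : Fin 3, Ω (-s) i 2 = Ω s i 2) := by
  rintro ⟨Ω, hΩ, hunit, hodd₀, hodd₁, -⟩
  let f : 𝕊² → Fin 2 → ℍ[ℝ] := fun s j => pureQuat ((Ω s).col j.castSucc)
  have hf : Continuous f := continuous_pi fun j =>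
    pureQuat.continuous_of_finiteDimensional.comp (continuous_apply _ |>.comp hΩ.matrix_transpose)
  have hind : ∀ s, LinearIndependent ℝ (f s) := fun s =>
    ((Matrix.linearIndependent_cols_iff_isUnit.2 (hunit s)).comp _ (Fin.castSucc_injective 2)).map'
      pureQuat ker_pureQuat
  have hcol : ∀ s, ∀ j : Fin 2, (Ω (-s)).col j.castSucc = -(Ω s).col j.castSucc := by
    intro s j
    funext i
    fin_cases j
    exacts [hodd₀ s i, hodd₁ s i]
  have hodd : ∀ s, f (-s) = -f s := fun s => funext fun j => by
    simp only [f, hcol, map_neg, Pi.neg_apply]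
  refine not_exists_odd_quaternionPair_on_sphere
    ⟨fun s => gramSchmidtNormed ℝ (f s) 0, fun s => gramSchmidtNormed ℝ (f s) 1,
      continuous_gramSchmidtNormed hf hind 0, continuous_gramSchmidtNormed hf hind 1,
      fun s => isQuaternionPair_gramSchmidtNormed (hind s) (fun _ => rfl) zero_ne_one,
      fun s => ?_, fun s => ?_⟩ <;>
    simp only [hodd, gramSchmidtNormed_neg]
end

section
/- (Non-triviality of nγ over ℝP¹ for n odd, concrete form) Let n be odd. There is no continuous map Λ : S¹ → Matrix (Fin n) (Fin n) ℝ satisfying Λ(-s) = -Λ(s) for all s ∈ S¹ such that Λ(s) is invertible for every s ∈ S¹. -/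
/-! The determinant of `Λ` is a continuous real function on the circle, odd because `n` is odd
and nowhere zero because every `Λ s` is invertible. An odd real function changes sign between `s`
and `-s`, so by the intermediate value theorem on the connected circle it has a zero. -/

open Metric

theorem Matrix.det_neg_of_odd_card {ι R : Type*} [Fintype ι] [DecidableEq ι] [CommRing R]
    (h : Odd (Fintype.card ι)) (A : Matrix ι ι R) : (-A).det = -A.det := by
  rw [Matrix.det_neg, h.neg_one_pow, neg_one_mul]

theorem connectedSpace_sphere {E : Type*} [NormedAddCommGroup E] [NormedSpace ℝ E]
    (hE : 1 < Module.rank ℝ E) (x : E) {r : ℝ} (hr : 0 ≤ r) : ConnectedSpace (sphere x r) :=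
  isConnected_iff_connectedSpace.mp (isConnected_sphere hE x hr)

theorem Continuous.exists_eq_zero_of_map_neg {X α : Type*} [TopologicalSpace X] [ConnectedSpace X]
    [Neg X] [AddCommGroup α] [LinearOrder α] [IsOrderedAddMonoid α] [TopologicalSpace α]
    [OrderClosedTopology α] {f : X → α} (hf : Continuous f) (hodd : ∀ x, f (-x) = -f x) :
    ∃ x, f x = 0 := by
  obtain ⟨x⟩ := ‹ConnectedSpace X›.toNonempty
  rcases le_total (f x) 0 with hx | hx
  · exact intermediate_value_univ x (-x) hf ⟨hx, by rw [hodd]; exact neg_nonneg.mpr hx⟩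
  · exact intermediate_value_univ (-x) x hf ⟨by rw [hodd]; exact neg_nonpos.mpr hx, hx⟩

/-- Non-triviality of nγ over ℝP¹ for n odd (concrete form): for n odd there is
no continuous odd family of invertible n×n real matrices over the circle S¹. -/
theorem no_odd_invertible_matrix_family_on_circle (n : ℕ) (hn : Odd n) :
    ¬ ∃ Λ : Metric.sphere (0 : EuclideanSpace ℝ (Fin 2)) 1 →
        Matrix (Fin n) (Fin n) ℝ,
      Continuous Λ ∧ (∀ s, Λ (-s) = -Λ s) ∧ (∀ s, IsUnit (Λ s)) := by
  rintro ⟨Λ, hcont, hodd, hunit⟩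
  have : ConnectedSpace (sphere (0 : EuclideanSpace ℝ (Fin 2)) 1) := by
    refine connectedSpace_sphere ?_ 0 zero_le_one
    rw [← Module.finrank_eq_rank, finrank_euclideanSpace_fin]
    exact_mod_cast one_lt_two
  obtain ⟨s, hs⟩ := hcont.matrix_det.exists_eq_zero_of_map_neg fun s => by
    rw [hodd, Matrix.det_neg_of_odd_card (by rwa [Fintype.card_fin])]
  exact ((Matrix.isUnit_iff_isUnit_det _).mp (hunit s)).ne_zero hs
end
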